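/- arXiv:0910.2446 — 8 statements merged into one kernel-verified Lean document; each statement's English description precedes it below -/
import Mathlib

section
/- Let a, b be real numbers with a² − b² = 1, let t be real, and let n be a natural number. Then T_n evaluated at the complex number a·cos t + i·b·sin t equals ½((a + b)ⁿ·e^{int} + (a − b)ⁿ·e^{−int}). -/
/-!
With `x = (a + b) e^{it}` and `y = (a - b) e^{-it}` we have `x y = a² - b² = 1` and
`x + y = 2 (a cos t + i b sin t)`. For any `x y = 1`, the recurrence `T_{n+2} = 2X T_{n+1} - T_n`
shows `2 T_n((x + y) / 2) = xⁿ + yⁿ`, since `xⁿ + yⁿ` satisfies the same recurrence.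
-/

open Polynomial Complex

theorem Polynomial.Chebyshev.two_mul_T_eval_of_mul_eq_one {R : Type*} [CommRing R] {x y z : R}
    (hxy : x * y = 1) (hz : 2 * z = x + y) :
    ∀ n : ℕ, 2 * (Chebyshev.T R n).eval z = x ^ n + y ^ n
  | 0 => by norm_num
  | 1 => by simpa using hz
  | n + 2 => by
    have ih₁ := two_mul_T_eval_of_mul_eq_one hxy hz (n + 1)
    have ih₀ := two_mul_T_eval_of_mul_eq_one hxy hz n
    push_cast at ih₁ ⊢
    simp only [Chebyshev.T_add_two, eval_sub, eval_mul, eval_X, eval_ofNat]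
    linear_combination
      2 * (Chebyshev.T R (n + 1)).eval z * hz + (x + y) * ih₁ - ih₀ + (x ^ n + y ^ n) * hxy

theorem Polynomial.Chebyshev.two_mul_T_eval_mul_cos_add_I_mul_sin {a b : ℂ}
    (h : a ^ 2 - b ^ 2 = 1) (t : ℂ) (n : ℕ) :
    2 * (Chebyshev.T ℂ n).eval (a * cos t + I * b * sin t) =
      (a + b) ^ n * exp (I * n * t) + (a - b) ^ n * exp (-(I * n * t)) := by
  have hexp : exp (t * I) * exp (-t * I) = 1 := by rw [← exp_add]; simp
  rw [two_mul_T_eval_of_mul_eq_one (x := (a + b) * exp (t * I)) (y := (a - b) * exp (-t * I))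
    ?_ ?_ n, mul_pow, mul_pow, ← exp_nat_mul, ← exp_nat_mul]
  · ring_nf
  · linear_combination exp (t * I) * exp (-t * I) * h + hexp
  · linear_combination a * two_cos t + b * I * two_sin t - b * (exp (t * I) - exp (-t * I)) * I_sq

/-- If `a² - b² = 1`, then
`T_n(a·cos t + i·b·sin t) = ½((a+b)ⁿ e^{int} + (a−b)ⁿ e^{−int})`. -/
theorem stmt_1 (a b t : ℝ) (h : a ^ 2 - b ^ 2 = 1) (n : ℕ) :
    (Polynomial.Chebyshev.T ℂ n).eval
        ((a : ℂ) * Real.cos t + Complex.I * b * Real.sin t) =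
      (1 / 2) * (((a : ℂ) + b) ^ n * Complex.exp (Complex.I * n * t) +
        ((a : ℂ) - b) ^ n * Complex.exp (-(Complex.I * n * t))) := by
  have hℂ : (a : ℂ) ^ 2 - (b : ℂ) ^ 2 = 1 := by exact_mod_cast h
  rw [ofReal_cos, ofReal_sin, ← Chebyshev.two_mul_T_eval_mul_cos_add_I_mul_sin hℂ]
  ring
end

section
/- Let n ≥ 1 be a natural number, let a > b > 0 be real numbers, and set c = √(a² − b²) (assume a ≠ b so c > 0). Then the function f : ℝ → ℂ defined by f(t) = T_n((a/c)·cos t + i·(b/c)·sin t) is periodic with period 2π/n. -/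
/-!
Whenever `z₁² + z₂² = 1` there is a complex `w` with `cos w = z₁` and `sin w = z₂`, so
`z₁ cos t + z₂ sin t = cos (t - w)` and `T_n` of it is `cos (n t - n w)`, which is `2π/n`-periodic
in `t`. For `z₁ = a/c`, `z₂ = i b/c` the constraint is `a² - b² = c²`.
-/

open Complex Polynomial Polynomial.Chebyshev

theorem Complex.exists_cos_eq_and_sin_eq {a b : ℂ} (h : a ^ 2 + b ^ 2 = 1) :
    ∃ w : ℂ, cos w = a ∧ sin w = b := by
  have hprod : (a + b * I) * (a - b * I) = 1 := by
    linear_combination h - b ^ 2 * I_sq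
  set w := -I * log (a + b * I)
  have hexp : exp (w * I) = a + b * I := by
    rw [show w * I = log (a + b * I) by linear_combination (-log (a + b * I)) * I_sq,
      exp_log (left_ne_zero_of_mul_eq_one hprod)]
  have hexp_neg : exp (-w * I) = a - b * I := by
    rw [neg_mul, exp_neg, hexp, inv_eq_of_mul_eq_one_right hprod]
  refine ⟨w, ?_, ?_⟩
  · rw [cos, hexp, hexp_neg]; ring
  · rw [sin, hexp, hexp_neg]; linear_combination (-b) * I_sq

theorem periodic_eval_chebyshev_T_cos_sub (n : ℕ) (w : ℂ) :
    Function.Periodic (fun t : ℝ => (T ℂ n).eval (cos (t - w))) (2 * Real.pi / n) := by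
  intro t
  rcases eq_or_ne n 0 with rfl | hn
  · simp -- the period `2π / 0` is `0`
  simp only [T_complex_cos]
  have hshift : ((n : ℤ) : ℂ) * (((t + 2 * Real.pi / n : ℝ) : ℂ) - w)
      = ((n : ℤ) : ℂ) * ((t : ℂ) - w) + 2 * Real.pi := by
    push_cast
    field_simp
    ring
  rw [hshift, cos_add_two_pi]

theorem periodic_eval_chebyshev_T_cos_add_sin (n : ℕ) {z₁ z₂ : ℂ} (h : z₁ ^ 2 + z₂ ^ 2 = 1) :
    Function.Periodic (fun t : ℝ => (T ℂ n).eval (z₁ * Real.cos t + z₂ * Real.sin t))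
      (2 * Real.pi / n) := by
  obtain ⟨w, hcos, hsin⟩ := Complex.exists_cos_eq_and_sin_eq h
  have hsum (t : ℝ) : z₁ * Real.cos t + z₂ * Real.sin t = cos (t - w) := by
    rw [cos_sub, hcos, hsin, ofReal_cos, ofReal_sin]; ring
  simpa only [hsum] using periodic_eval_chebyshev_T_cos_sub n w

theorem stmt_2_general (n : ℕ) (a b : ℝ) (hb : 0 < b) (hba : b < a)
    (c : ℝ) (hc : c = Real.sqrt (a ^ 2 - b ^ 2)) :
    Function.Periodic
      (fun t : ℝ => (Polynomial.Chebyshev.T ℂ n).eval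
        (((a / c : ℝ) : ℂ) * Real.cos t + Complex.I * ((b / c : ℝ) : ℂ) * Real.sin t))
      (2 * Real.pi / n) := by
  have hc_sq : c ^ 2 = a ^ 2 - b ^ 2 := by
    rw [hc, Real.sq_sqrt]; nlinarith
  have hc_ne : (c : ℂ) ≠ 0 := by
    rw [ofReal_ne_zero, hc]; apply ne_of_gt; apply Real.sqrt_pos.mpr; nlinarith
  apply periodic_eval_chebyshev_T_cos_add_sin
  push_cast
  field_simp
  have hc_sq' : (c : ℂ) ^ 2 = a ^ 2 - b ^ 2 := mod_cast hc_sq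
  linear_combination (b : ℂ) ^ 2 * I_sq - hc_sq'

/-- For `a > b > 0` and `c = √(a² − b²)`, the function
`t ↦ T_n((a/c)·cos t + i·(b/c)·sin t)` is periodic with period `2π/n`. -/
theorem stmt_2 (n : ℕ) (hn : 1 ≤ n) (a b : ℝ) (hb : 0 < b) (hba : b < a)
    (c : ℝ) (hc : c = Real.sqrt (a ^ 2 - b ^ 2)) :
    Function.Periodic
      (fun t : ℝ => (Polynomial.Chebyshev.T ℂ n).eval
        (((a / c : ℝ) : ℂ) * Real.cos t + Complex.I * ((b / c : ℝ) : ℂ) * Real.sin t))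
      (2 * Real.pi / n) :=
  stmt_2_general n a b hb hba c hc
end

section
/- Let n ≥ 1 be a natural number, let a > b > 0 be real numbers with a² − b² = 1, let θ be real, and set w = ½((a + b)ⁿ·e^{inθ} + (a − b)ⁿ·e^{−inθ}). Define z_k = a·cos(θ + 2kπ/n) + i·b·sin(θ + 2kπ/n) for k = 0, …, n − 1. Then the points z_0, …, z_{n−1} are pairwise distinct, and the solution set {z ∈ ℂ : T_n(z) = w} is exactly {z_0, …, z_{n−1}}. -/
/-!
With `c = arsinh b` we have `cosh c = a` and `sinh c = b`, so
`z_k = cos (θ - c i + 2kπ/n)` and `w = cos (n (θ - c i))`. Since `T_n (cos u) = cos (n u)`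
and `cos` is onto `ℂ`, the solutions of `T_n ζ = cos (n v)` are the `cos (v + 2jπ/n)`,
`j ∈ ℤ`, which depend only on `j mod n`. Two equal points of the ellipse have equal `e^{it}`,
so distinctness of the `z_k` reduces to that of the `n`-th roots of unity.
-/

open Complex Polynomial
open scoped Real

lemma Real.cosh_arsinh_of_sq_sub_sq_eq_one {a b : ℝ} (ha : 0 < a) (h : a ^ 2 - b ^ 2 = 1) :
    Real.cosh (Real.arsinh b) = a := by
  rw [Real.cosh_arsinh, Real.sqrt_eq_iff_mul_self_eq_of_pos ha]
  linarith

lemma Complex.cos_sub_ofReal_mul_I (x : ℂ) (c : ℝ) :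
    cos (x - c * I) = cos x * Real.cosh c + I * sin x * Real.sinh c := by
  rw [sub_eq_add_neg, ← neg_mul, cos_add_mul_I, cosh_neg, sinh_neg, ofReal_cosh, ofReal_sinh]
  ring

lemma Complex.cos_natCast_mul_sub_mul_I (n : ℕ) (θ c : ℝ) :
    cos (n * (θ - c * I)) = 1 / 2 * ((Real.exp c : ℂ) ^ n * exp (I * n * θ) +
      (Real.exp (-c) : ℂ) ^ n * exp (-(I * n * θ))) := by
  simp only [ofReal_exp, ← exp_nat_mul, ← exp_add, cos]
  push_cast
  ring_nf
  simp only [I_sq]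
  ring_nf

lemma Polynomial.Chebyshev.T_eval_eq_cos_mul_iff {n : ℤ} (hn : n ≠ 0) (v ζ : ℂ) :
    (T ℂ n).eval ζ = cos (n * v) ↔ ∃ j : ℤ, ζ = cos (v + 2 * j * π / n) := by
  have hn' : (n : ℂ) ≠ 0 := Int.cast_ne_zero.mpr hn
  constructor
  · obtain ⟨ψ, rfl⟩ := cos_surjective ζ
    rw [T_complex_cos, Complex.cos_eq_cos_iff]
    rintro ⟨m, hm | hm⟩
    · refine ⟨-m, congrArg cos ?_⟩
      field_simp
      push_cast
      linear_combination -hm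
    · refine ⟨-m, ?_⟩
      rw [← cos_neg ψ]
      congr 1
      field_simp
      push_cast
      linear_combination -hm
  · rintro ⟨j, rfl⟩
    rw [T_complex_cos, ← cos_add_int_mul_two_pi (n * v) j]
    congr 1
    field_simp

lemma Complex.exists_lt_cos_add_two_mul_pi_div_eq {n : ℕ} (hn : 0 < n) (v : ℂ) (j : ℤ) :
    ∃ k < n, cos (v + 2 * j * π / n) = cos (v + 2 * k * π / n) := by
  have hn' : (n : ℂ) ≠ 0 := Nat.cast_ne_zero.mpr hn.ne'
  have hperiodic : Function.Periodic (fun j : ℤ ↦ cos (v + 2 * j * π / n)) n := fun j ↦ by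
    dsimp only
    rw [← cos_add_int_mul_two_pi (v + 2 * j * π / n) 1]
    congr 1
    field_simp
    push_cast
    ring
  obtain ⟨k, ⟨hk0, hkn⟩, hk⟩ := hperiodic.exists_mem_Ico₀ (by exact_mod_cast hn) j
  obtain ⟨k, rfl⟩ := Int.eq_ofNat_of_zero_le hk0
  exact ⟨k, by omega, by rw [hk]; push_cast; rfl⟩

lemma exp_mul_I_eq_of_ellipse_eq {a b s t : ℝ} (ha : a ≠ 0) (hb : b ≠ 0)
    (h : (a : ℂ) * Real.cos s + I * b * Real.sin s = a * Real.cos t + I * b * Real.sin t) :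
    exp (s * I) = exp (t * I) := by
  have hcos : Real.cos s = Real.cos t :=
    mul_left_cancel₀ ha (by simpa [-ofReal_cos] using congrArg re h)
  have hsin : Real.sin s = Real.sin t :=
    mul_left_cancel₀ hb (by simpa [-ofReal_sin] using congrArg im h)
  rw [exp_mul_I, exp_mul_I, ← ofReal_cos, ← ofReal_sin, ← ofReal_cos, ← ofReal_sin, hcos, hsin]

lemma Complex.exp_add_two_mul_pi_div_mul_I (θ : ℝ) (n k : ℕ) :
    exp (((θ + 2 * k * π / n : ℝ) : ℂ) * I) = exp (θ * I) * exp (2 * π * I / n) ^ k := by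
  rw [← exp_nat_mul, ← exp_add]
  push_cast
  ring_nf

lemma eq_of_ellipse_add_two_mul_pi_div_eq {a b : ℝ} (ha : a ≠ 0) (hb : b ≠ 0) (θ : ℝ)
    {n k l : ℕ} (hk : k < n) (hl : l < n)
    (h : (a : ℂ) * Real.cos (θ + 2 * k * π / n) + I * b * Real.sin (θ + 2 * k * π / n) =
      a * Real.cos (θ + 2 * l * π / n) + I * b * Real.sin (θ + 2 * l * π / n)) :
    k = l := by
  have hexp := exp_mul_I_eq_of_ellipse_eq ha hb h
  rw [exp_add_two_mul_pi_div_mul_I, exp_add_two_mul_pi_div_mul_I] at hexp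
  exact (isPrimitiveRoot_exp n (by omega)).pow_inj hk hl (mul_left_cancel₀ (exp_ne_zero _) hexp)

/-- For `a > b > 0` with `a² − b² = 1` and
`w = ½((a+b)ⁿ e^{inθ} + (a−b)ⁿ e^{−inθ})`, the points
`z_k = a·cos(θ + 2kπ/n) + i·b·sin(θ + 2kπ/n)`, `k = 0, …, n−1`, are
pairwise distinct and `{z : T_n(z) = w} = {z_0, …, z_{n−1}}`. -/
theorem stmt_4 (n : ℕ) (hn : 1 ≤ n) (a b : ℝ) (hb : 0 < b) (hba : b < a)
    (h1 : a ^ 2 - b ^ 2 = 1) (θ : ℝ) (w : ℂ)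
    (hw : w = (1 / 2) * (((a : ℂ) + b) ^ n * Complex.exp (Complex.I * n * θ) +
      ((a : ℂ) - b) ^ n * Complex.exp (-(Complex.I * n * θ))))
    (z : ℕ → ℂ)
    (hz : ∀ k : ℕ, z k = (a : ℂ) * Real.cos (θ + 2 * k * Real.pi / n) +
      Complex.I * b * Real.sin (θ + 2 * k * Real.pi / n)) :
    (∀ k < n, ∀ l < n, k ≠ l → z k ≠ z l) ∧
      {ζ : ℂ | (Polynomial.Chebyshev.T ℂ n).eval ζ = w} = {ζ : ℂ | ∃ k < n, ζ = z k} := by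
  set c := Real.arsinh b
  have hcosh : Real.cosh c = a := Real.cosh_arsinh_of_sq_sub_sq_eq_one (hb.trans hba) h1
  have hsinh : Real.sinh c = b := Real.sinh_arsinh b
  set v : ℂ := θ - c * I
  have hzcos : ∀ k : ℕ, z k = cos (v + 2 * k * π / n) := fun k ↦ by
    rw [hz, show v + 2 * k * π / n = ((θ + 2 * k * π / n : ℝ) : ℂ) - c * I by push_cast; ring,
      cos_sub_ofReal_mul_I, ← ofReal_cos, ← ofReal_sin, hcosh, hsinh]
    ring
  have hwcos : w = cos ((n : ℤ) * v) := by
    rw [hw, Int.cast_natCast, cos_natCast_mul_sub_mul_I, ← Real.cosh_add_sinh,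
      ← Real.cosh_sub_sinh, hcosh, hsinh]
    push_cast
    ring
  refine ⟨fun k hk l hl hkl hzkl ↦ hkl ?_, ?_⟩
  · rw [hz, hz] at hzkl
    exact eq_of_ellipse_add_two_mul_pi_div_eq (hb.trans hba).ne' hb.ne' θ hk hl hzkl
  ext ζ
  rw [Set.mem_ofPred_eq, Set.mem_ofPred_eq, hwcos, Chebyshev.T_eval_eq_cos_mul_iff (by omega)]
  constructor
  · rintro ⟨j, rfl⟩
    obtain ⟨k, hk, hjk⟩ := exists_lt_cos_add_two_mul_pi_div_eq hn v j
    exact ⟨k, hk, by rw [hzcos, ← hjk, Int.cast_natCast]⟩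
  · rintro ⟨k, hk, rfl⟩
    exact ⟨k, by rw [hzcos, Int.cast_natCast, Int.cast_natCast]⟩
end

section
/- Let n ≥ 1 be a natural number and let w be a complex number that is not a real number lying in the interval [−1, 1]. Then there exist real numbers a > b > 0 with a² − b² = 1 and θ ∈ ℝ such that the solution set {z ∈ ℂ : T_n(z) = w} equals {a·cos(θ + 2kπ/n) + i·b·sin(θ + 2kπ/n) : k = 0, …, n − 1}. In other words, every nondegenerate level set of T_n consists of n equally spaced (in parameter) points on a single ellipse with foci ±1. -/
/-! Write `w = cos ψ` with `Im ψ < 0`, which is possible because `w ∉ [-1, 1]`. Since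
`T_n (cos ξ) = cos (n ξ)`, the solutions of `T_n z = w` are the `n` points `cos ((ψ + 2kπ) / n)`,
and for `ψ = x - s i` these are `cosh (s/n) cos (x/n + 2kπ/n) + i sinh (s/n) sin (x/n + 2kπ/n)`:
points of the ellipse with semi-axes `cosh (s/n) > sinh (s/n) > 0`, whose foci are `±1` because
`cosh² - sinh² = 1`. -/

open Complex Polynomial.Chebyshev

theorem Function.Periodic.exists_lt_apply_eq {α : Type*} {f : ℤ → α} {n : ℕ}
    (hf : Function.Periodic f n) (hn : n ≠ 0) (m : ℤ) : ∃ k < n, f k = f m := by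
  have hmod : 0 ≤ m % n := Int.emod_nonneg m (by omega)
  have hmod' : m % n < n := Int.emod_lt_of_pos m (by omega)
  refine ⟨(m % n).toNat, by omega, ?_⟩
  rw [Int.toNat_of_nonneg hmod, ← hf.int_mul (m / n) (m % n), Int.cast_id, mul_comm,
    Int.emod_add_mul_ediv]

theorem Complex.cos_ofReal_sub_ofReal_mul_I (u v : ℝ) :
    cos (u - v * I) = (Real.cosh v : ℂ) * Real.cos u + I * Real.sinh v * Real.sin u := by
  rw [cos_sub, cos_mul_I, sin_mul_I, ofReal_cos, ofReal_sin, ofReal_cosh, ofReal_sinh]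
  ring

theorem Complex.exists_cos_eq_and_im_neg {w : ℂ}
    (hw : ¬ ∃ x : ℝ, x ∈ Set.Icc (-1 : ℝ) 1 ∧ (x : ℂ) = w) : ∃ ψ : ℂ, cos ψ = w ∧ ψ.im < 0 := by
  obtain ⟨ψ, rfl⟩ := cos_surjective w
  have him : ψ.im ≠ 0 := by
    intro h
    refine hw ⟨Real.cos ψ.re, ⟨Real.neg_one_le_cos _, Real.cos_le_one _⟩, ?_⟩
    rw [ofReal_cos, ← re_add_im ψ, h]
    simp
  rcases him.lt_or_gt with h | h
  · exact ⟨ψ, rfl, h⟩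
  · exact ⟨-ψ, cos_neg ψ, by simpa using h⟩

theorem Polynomial.Chebyshev.T_eval_eq_cos_iff {n : ℕ} (hn : n ≠ 0) (ψ z : ℂ) :
    (T ℂ n).eval z = cos ψ ↔ ∃ k < n, z = cos ((ψ + 2 * k * Real.pi) / n) := by
  have hnC : (n : ℂ) ≠ 0 := Nat.cast_ne_zero.mpr hn
  set f : ℤ → ℂ := fun m ↦ cos ((ψ + 2 * m * Real.pi) / n)
  have hf : Function.Periodic f n := fun m ↦ by
    simp only [f]
    rw [← cos_add_two_pi ((ψ + 2 * m * Real.pi) / n)]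
    congr 1
    push_cast
    field_simp
    ring
  constructor
  · intro hz
    obtain ⟨ξ, rfl⟩ := cos_surjective z
    have hξ : cos (n * ξ) = cos ψ := by simpa using (T_complex_cos ξ n).symm.trans hz
    obtain ⟨m, hm⟩ : ∃ m : ℤ, f m = cos ξ := by
      obtain ⟨m, hm | hm⟩ := cos_eq_cos_iff.mp hξ
      · refine ⟨-m, congrArg cos ?_⟩
        rw [hm]
        push_cast
        field_simp
        ring
      · refine ⟨-m, (congrArg cos ?_).trans (cos_neg ξ)⟩
        rw [hm]
        push_cast
        field_simp
        ring
    obtain ⟨k, hk, hfk⟩ := hf.exists_lt_apply_eq hn m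
    exact ⟨k, hk, by simpa [f, ← hm] using hfk.symm⟩
  · rintro ⟨k, -, rfl⟩
    rw [← Int.cast_natCast (R := ℂ) n, T_complex_cos, Int.cast_natCast, mul_div_cancel₀ _ hnC,
      show ψ + 2 * k * Real.pi = ψ + k * (2 * Real.pi) by ring]
    exact_mod_cast cos_add_nat_mul_two_pi ψ k

/-- Every level set of `T_n` at a value `w` which is not a real number in
`[−1, 1]` consists of `n` equally spaced (in parameter) points on a single
ellipse with foci `±1`. -/
theorem stmt_5 (n : ℕ) (hn : 1 ≤ n) (w : ℂ)
    (hw : ¬ ∃ x : ℝ, x ∈ Set.Icc (-1 : ℝ) 1 ∧ (x : ℂ) = w) :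
    ∃ a b θ : ℝ, 0 < b ∧ b < a ∧ a ^ 2 - b ^ 2 = 1 ∧
      {ζ : ℂ | (Polynomial.Chebyshev.T ℂ n).eval ζ = w} =
        {ζ : ℂ | ∃ k < n, ζ = (a : ℂ) * Real.cos (θ + 2 * k * Real.pi / n) +
          Complex.I * b * Real.sin (θ + 2 * k * Real.pi / n)} := by
  obtain ⟨ψ, rfl, hψ⟩ := exists_cos_eq_and_im_neg hw
  have hn₀ : n ≠ 0 := by omega
  set s := -ψ.im / n
  have hs : 0 < s := div_pos (neg_pos.mpr hψ) (by positivity)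
  refine ⟨Real.cosh s, Real.sinh s, ψ.re / n, Real.sinh_pos_iff.mpr hs, Real.sinh_lt_cosh s,
    Real.cosh_sq_sub_sinh_sq s, ?_⟩
  ext z
  simp only [Set.mem_ofPred_eq, T_eval_eq_cos_iff hn₀]
  refine exists_congr fun k ↦ and_congr_right fun _ ↦ ?_
  have hpoint : (ψ + 2 * k * Real.pi) / n = ↑(ψ.re / n + 2 * k * Real.pi / n) - (s : ℂ) * I := by
    apply Complex.ext <;> simp [s] <;> ring
  rw [hpoint, cos_ofReal_sub_ofReal_mul_I]
end

section
/- Let n ≥ 3 be a natural number and let p be a complex polynomial of degree n whose derivative is p' = γ·∏_{k=1}^{n−1}(X − (α + β·cos(kπ/n))) for some complex constants γ ≠ 0, α, and β ≠ 0. Suppose the roots of p do not all lie on a single real line in ℂ. Then the roots of p form an affinely regular n-gon: there exist complex numbers u, v, w with u ≠ 0, v ≠ 0 and |u| ≠ |v| such that the multiset of roots of p equals {u·e^{2πik/n} + v·e^{−2πik/n} + w : k = 0, …, n − 1}; in particular p has n distinct roots. -/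
/-!
Substituting `X = α + β x` turns `p'` into a multiple of `∏ (x - cos (kπ/n)) ∝ U_{n-1} ∝ T_n'`,
so `p (α + β cos ψ) = K (cos (nψ) - cos θ)` for some `K ≠ 0` and `θ`. Hence the `n` points
`α + β cos ((θ + 2πk)/n) = u ζ^k + v ζ^{-k} + α`, with `ζ = e^{2πi/n}`, `u = (β/2) e^{iθ/n}` and
`v = (β/2) e^{-iθ/n}`, are roots of `p`. If `θ` were real, every root `α + β cos φ` would have
`cos (nφ) = cos θ`, forcing `φ` real, so all roots would lie on the line `α + ℝβ`. So `Im θ ≠ 0`,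
i.e. `|u| ≠ |v|`, which makes the `n` points distinct; they are therefore all the roots.
-/

open Polynomial Complex

theorem chebyshev_U_real_eq_prod (m : ℕ) :
    Chebyshev.U ℝ m =
      C (2 ^ m) * ∏ k ∈ Finset.range m, (X - C (Real.cos ((k + 1) * Real.pi / (m + 1)))) := by
  have hinj := (Finset.range m).nodup_map_iff_injOn.mp (Chebyshev.roots_U_real_nodup m)
  have hroots : (Chebyshev.U ℝ m).roots =
      (Finset.range m).val.map fun k : ℕ ↦ Real.cos ((k + 1) * Real.pi / (m + 1)) := by
    rw [Chebyshev.roots_U_real, Finset.image_val_of_injOn hinj]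
  have hcard : Multiset.card (Chebyshev.U ℝ m).roots = (Chebyshev.U ℝ m).natDegree := by
    simp [hroots]
  rw [← C_leadingCoeff_mul_prod_multiset_X_sub_C hcard, hroots,
    Chebyshev.leadingCoeff_U_natCast, Multiset.map_map]
  rfl

theorem chebyshev_U_complex_eq_prod (m : ℕ) :
    Chebyshev.U ℂ m =
      C (2 ^ m) * ∏ k ∈ Finset.range m, (X - C (Real.cos ((k + 1) * Real.pi / (m + 1)) : ℂ)) := by
  rw [← Chebyshev.map_U (algebraMap ℝ ℂ), chebyshev_U_real_eq_prod]
  simp [Polynomial.map_prod]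

theorem derivative_chebyshev_T_complex_eq_prod {n : ℕ} (hn : 0 < n) :
    derivative (Chebyshev.T ℂ n) = C ((n : ℂ) * 2 ^ (n - 1)) *
      ∏ k ∈ Finset.Icc 1 (n - 1), (X - C (Real.cos (k * Real.pi / n) : ℂ)) := by
  obtain ⟨m, rfl⟩ := Nat.exists_eq_add_one_of_ne_zero hn.ne'
  rw [Chebyshev.T_derivative_eq_U, show ((m + 1 : ℕ) : ℤ) - 1 = m by push_cast; ring,
    chebyshev_U_complex_eq_prod, Nat.add_sub_cancel, ← Finset.Ico_add_one_right_eq_Icc,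
    Finset.prod_Ico_eq_prod_range, Nat.add_sub_cancel]
  simp [mul_assoc, add_comm]

theorem prod_X_sub_C_comp_affine {R ι : Type*} [CommRing R] (s : Finset ι) (c : ι → R)
    (α β : R) :
    (∏ i ∈ s, (X - C (α + β * c i))).comp (C α + C β * X) =
      C (β ^ s.card) * ∏ i ∈ s, (X - C (c i)) := by
  have h : ∀ i ∈ s, (X - C (α + β * c i)).comp (C α + C β * X) = C β * (X - C (c i)) := by
    intro i _
    rw [sub_comp, X_comp, C_comp, C_add, C_mul]
    ring
  rw [prod_comp, Finset.prod_congr rfl h, Finset.prod_mul_distrib, Finset.prod_const, C_pow]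

section CriticalPointsCos

variable {n : ℕ} {p : ℂ[X]} {γ α β : ℂ}

theorem exists_comp_affine_eq_C_mul_T_add_C (hn : 0 < n) (hγ : γ ≠ 0) (hβ : β ≠ 0)
    (hp' : derivative p =
      γ • ∏ k ∈ Finset.Icc 1 (n - 1), (X - C (α + β * Real.cos (k * Real.pi / n)))) :
    ∃ K c : ℂ, K ≠ 0 ∧ p.comp (C α + C β * X) = C K * Chebyshev.T ℂ n + C c := by
  have hn' : (n : ℂ) ≠ 0 := Nat.cast_ne_zero.mpr hn.ne'
  set K := γ * β ^ n / (n * 2 ^ (n - 1))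
  have hder : derivative (p.comp (C α + C β * X)) = C K * derivative (Chebyshev.T ℂ n) := by
    rw [derivative_comp, hp', smul_eq_C_mul, mul_comp, C_comp, prod_X_sub_C_comp_affine,
      derivative_chebyshev_T_complex_eq_prod hn]
    simp only [derivative_add, derivative_C, derivative_mul, derivative_X, zero_add, zero_mul,
      mul_one, Nat.card_Icc, Nat.add_sub_cancel]
    rw [← mul_assoc, ← mul_assoc, ← mul_assoc, ← C_mul, ← C_mul, ← C_mul]
    congr 2
    rw [mul_right_comm, ← pow_succ', Nat.sub_add_cancel hn]
    simp only [K]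
    field_simp
  refine ⟨K, (p.comp (C α + C β * X) - C K * Chebyshev.T ℂ n).coeff 0, by simp [K, hγ, hβ, hn'], ?_⟩
  rw [← sub_eq_iff_eq_add']
  exact eq_C_of_derivative_eq_zero (by rw [derivative_sub, derivative_C_mul, hder, sub_self])

theorem exists_eval_add_mul_cos_eq (hn : 0 < n) (hγ : γ ≠ 0) (hβ : β ≠ 0)
    (hp' : derivative p =
      γ • ∏ k ∈ Finset.Icc 1 (n - 1), (X - C (α + β * Real.cos (k * Real.pi / n)))) :
    ∃ K θ : ℂ, K ≠ 0 ∧ ∀ ψ, p.eval (α + β * cos ψ) = K * (cos (n * ψ) - cos θ) := by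
  obtain ⟨K, c, hK, hp⟩ := exists_comp_affine_eq_C_mul_T_add_C hn hγ hβ hp'
  obtain ⟨θ, hθ⟩ := cos_surjective (-c / K)
  refine ⟨K, θ, hK, fun ψ => ?_⟩
  have h := congrArg (eval (cos ψ)) hp
  simp only [eval_comp, eval_add, eval_mul, eval_C, eval_X, Chebyshev.T_complex_cos] at h
  rw [hθ, mul_sub, mul_div_cancel₀ _ hK, h]
  push_cast
  ring

end CriticalPointsCos

theorem Complex.im_eq_zero_of_cos_eq_cos {x y : ℂ} (h : cos x = cos y) (hy : y.im = 0) :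
    x.im = 0 := by
  obtain ⟨k, hk | hk⟩ := cos_eq_cos_iff.mp h <;>
  · have := congrArg im hk
    simp only [hy, add_im, sub_im, mul_im, ofReal_re, ofReal_im, intCast_re, intCast_im] at this
    norm_num at this
    linarith

theorem Complex.eq_of_mul_add_mul_inv_eq {u v a b : ℂ} (huv : ‖u‖ ≠ ‖v‖) (ha : ‖a‖ = 1)
    (hb : ‖b‖ = 1) (h : u * a + v * a⁻¹ = u * b + v * b⁻¹) : a = b := by
  have ha0 : a ≠ 0 := norm_ne_zero_iff.mp (by simp [ha])
  have hb0 : b ≠ 0 := norm_ne_zero_iff.mp (by simp [hb])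
  have hfac : (a - b) * (u * (a * b) - v) = 0 := by
    field_simp at h
    linear_combination h
  refine sub_eq_zero.mp ((mul_eq_zero.mp hfac).resolve_right fun huv' => huv ?_)
  simpa [ha, hb] using congrArg norm (sub_eq_zero.mp huv')

theorem Complex.norm_mul_exp_ne_norm_mul_exp_neg {c z : ℂ} (hc : c ≠ 0) (hz : z.re ≠ 0) :
    ‖c * exp z‖ ≠ ‖c * exp (-z)‖ := by
  rw [norm_mul, norm_mul, norm_exp, norm_exp, neg_re, Ne,
    mul_right_inj' (norm_ne_zero_iff.mpr hc), Real.exp_eq_exp]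
  intro h
  exact hz (by linarith)

noncomputable def affineRegularPolygon (n : ℕ) (u v w : ℂ) (k : ℕ) : ℂ :=
  u * exp (2 * Real.pi * I * k / n) + v * exp (-(2 * Real.pi * I * k / n)) + w

theorem affineRegularPolygon_eq_cos (n : ℕ) (β θ w : ℂ) (k : ℕ) :
    affineRegularPolygon n (β / 2 * exp (θ * I / n)) (β / 2 * exp (-(θ * I / n))) w k =
      w + β * cos ((θ + 2 * Real.pi * k) / n) := by
  have h₁ : (θ + 2 * Real.pi * k) / n * I = θ * I / n + 2 * Real.pi * I * k / n := by ring
  have h₂ : -((θ + 2 * Real.pi * k) / n) * I = -(θ * I / n) + -(2 * Real.pi * I * k / n) := by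
    ring
  rw [affineRegularPolygon, cos, h₁, h₂, exp_add, exp_add]
  ring

theorem nodup_affineRegularPolygon {n : ℕ} {u v : ℂ} (huv : ‖u‖ ≠ ‖v‖) (w : ℂ) :
    ((Multiset.range n).map (affineRegularPolygon n u v w)).Nodup := by
  rcases Nat.eq_zero_or_pos n with rfl | hn
  · simp
  set ζ := exp (2 * Real.pi * I / n)
  have hζ : IsPrimitiveRoot ζ n := isPrimitiveRoot_exp n hn.ne'
  have hvertex : ∀ k, affineRegularPolygon n u v w k = u * ζ ^ k + v * (ζ ^ k)⁻¹ + w := by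
    intro k
    rw [affineRegularPolygon, ← exp_nat_mul, ← exp_neg]
    ring_nf
  have hnorm : ∀ k, ‖ζ ^ k‖ = 1 := fun k => by rw [norm_pow, hζ.norm'_eq_one hn.ne', one_pow]
  refine (Multiset.nodup_range n).map_on fun j hj k hk hjk => ?_
  rw [Multiset.mem_range] at hj hk
  rw [hvertex, hvertex, add_left_inj] at hjk
  exact hζ.pow_inj hj hk (eq_of_mul_add_mul_inv_eq huv (hnorm j) (hnorm k) hjk)

section RootsOfCosForm

variable {n : ℕ} {p : ℂ[X]} {K θ α β : ℂ}

theorem isRoot_affineRegularPolygon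
    (hp : ∀ ψ, p.eval (α + β * cos ψ) = K * (cos (n * ψ) - cos θ)) (hn : n ≠ 0) (k : ℕ) :
    p.IsRoot
      (affineRegularPolygon n (β / 2 * exp (θ * I / n)) (β / 2 * exp (-(θ * I / n))) α k) := by
  have hn' : (n : ℂ) ≠ 0 := Nat.cast_ne_zero.mpr hn
  rw [IsRoot, affineRegularPolygon_eq_cos, hp, mul_div_cancel₀ _ hn',
    show θ + 2 * Real.pi * k = θ + k * (2 * Real.pi) by ring, cos_add_nat_mul_two_pi, sub_self,
    mul_zero]

theorem exists_real_eq_add_mul_of_isRoot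
    (hp : ∀ ψ, p.eval (α + β * cos ψ) = K * (cos (n * ψ) - cos θ)) (hn : n ≠ 0) (hK : K ≠ 0)
    (hβ : β ≠ 0) (hθ : θ.im = 0) {r : ℂ} (hr : p.IsRoot r) : ∃ t : ℝ, r = α + t * β := by
  obtain ⟨φ, hφ⟩ := cos_surjective ((r - α) / β)
  have hr' : r = α + β * cos φ := by rw [hφ]; field_simp; ring
  rw [hr', IsRoot, hp, mul_eq_zero, sub_eq_zero] at hr
  have hφ_im : φ.im = 0 := by
    simpa [hn] using im_eq_zero_of_cos_eq_cos (hr.resolve_left hK) hθ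
  refine ⟨Real.cos φ.re, ?_⟩
  rw [hr', ofReal_cos, ← re_add_im φ, hφ_im]
  simp [mul_comm]

end RootsOfCosForm

open Polynomial in
/-- If the critical points of a degree-`n` polynomial `p` are
`α + β·cos(kπ/n)`, `k = 1, …, n−1` (with `β ≠ 0`), and the roots of `p` do not
all lie on a single real line, then the roots of `p` form an affinely regular
`n`-gon; in particular `p` has `n` distinct roots. -/
theorem stmt_6 (n : ℕ) (hn : 3 ≤ n) (p : Polynomial ℂ) (hdeg : p.natDegree = n)
    (γ α β : ℂ) (hγ : γ ≠ 0) (hβ : β ≠ 0)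
    (hp' : derivative p =
      γ • ∏ k ∈ Finset.Icc 1 (n - 1), (X - C (α + β * Real.cos (k * Real.pi / n))))
    (hline : ¬ ∃ z₀ d : ℂ, ∀ r ∈ p.roots, ∃ t : ℝ, r = z₀ + t * d) :
    ∃ u v w : ℂ, u ≠ 0 ∧ v ≠ 0 ∧ ‖u‖ ≠ ‖v‖ ∧
      p.roots = Multiset.map
        (fun k : ℕ => u * Complex.exp (2 * Real.pi * Complex.I * k / n) +
          v * Complex.exp (-(2 * Real.pi * Complex.I * k / n)) + w)
        (Multiset.range n) ∧
      p.roots.Nodup := by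
  have hn0 : n ≠ 0 := by omega
  obtain ⟨K, θ, hK, hp⟩ := exists_eval_add_mul_cos_eq (Nat.pos_of_ne_zero hn0) hγ hβ hp'
  have hθ : θ.im ≠ 0 := fun hθ => hline ⟨α, β, fun r hr =>
    exists_real_eq_add_mul_of_isRoot hp hn0 hK hβ hθ (isRoot_of_mem_roots hr)⟩
  have hβ2 : β / 2 ≠ 0 := div_ne_zero hβ two_ne_zero
  have huv := norm_mul_exp_ne_norm_mul_exp_neg hβ2 (z := θ * I / n) (by simp [hn0, hθ])
  have hnodup := nodup_affineRegularPolygon (n := n) huv α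
  have hp0 : p ≠ 0 := by rintro rfl; simp at hdeg; omega
  have hroots := roots_eq_of_natDegree_le_card_of_ne_zero (S := ⟨_, hnodup⟩)
    (by simpa using fun k _ => isRoot_affineRegularPolygon hp hn0 k) (by simp [hdeg]) hp0
  exact ⟨_, _, α, mul_ne_zero hβ2 (exp_ne_zero _), mul_ne_zero hβ2 (exp_ne_zero _), huv, hroots,
    hroots ▸ hnodup⟩
end

section
/- Let u, v, s be complex numbers with s² = u·v, and let t be real. Then |u·e^{it} + v·e^{−it} − 2s| + |u·e^{it} + v·e^{−it} + 2s| = 2(|u| + |v|). Consequently, the curve t ↦ u·e^{it} + v·e^{−it} + w lies on the ellipse with foci w − 2s and w + 2s and string length 2(|u| + |v|). -/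
theorem exists_sq_eq_and_mul_eq_of_sq_eq_mul {K : Type*} [Field K] [IsAlgClosed K]
    {p q s : K} (hs : s ^ 2 = p * q) : ∃ a b : K, a ^ 2 = p ∧ b ^ 2 = q ∧ a * b = s := by
  obtain ⟨a, rfl⟩ := IsAlgClosed.exists_pow_nat_eq p two_pos
  obtain ⟨b, rfl⟩ := IsAlgClosed.exists_pow_nat_eq q two_pos
  rw [← mul_pow] at hs
  rcases sq_eq_sq_iff_eq_or_eq_neg.mp hs with rfl | rfl
  · exact ⟨a, b, rfl, rfl, rfl⟩
  · exact ⟨a, -b, rfl, neg_sq b, mul_neg a b⟩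

/- With `p = a²`, `q = b²`, `s = a b` the two distances become `‖a ∓ b‖²`, and the
parallelogram law sums them to `2 (‖a‖² + ‖b‖²) = 2 (‖p‖ + ‖q‖)`. -/
theorem Complex.norm_sub_two_mul_add_norm_add_two_mul_of_sq_eq_mul {p q s : ℂ}
    (hs : s ^ 2 = p * q) : ‖p + q - 2 * s‖ + ‖p + q + 2 * s‖ = 2 * (‖p‖ + ‖q‖) := by
  obtain ⟨a, b, rfl, rfl, rfl⟩ := exists_sq_eq_and_mul_eq_of_sq_eq_mul hs
  have hsub : a ^ 2 + b ^ 2 - 2 * (a * b) = (a - b) ^ 2 := by ring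
  have hadd : a ^ 2 + b ^ 2 + 2 * (a * b) = (a + b) ^ 2 := by ring
  have hpar := parallelogram_law_with_norm ℝ a b
  simp only [hsub, hadd, norm_pow]
  linarith

/-- If `s² = u·v`, then for all real `t`,
`|u·e^{it} + v·e^{−it} − 2s| + |u·e^{it} + v·e^{−it} + 2s| = 2(|u| + |v|)`;
hence the curve `t ↦ u·e^{it} + v·e^{−it} + w` lies on the ellipse with foci
`w ± 2s` and string length `2(|u| + |v|)`. -/
theorem stmt_7 (u v s : ℂ) (hs : s ^ 2 = u * v) (t : ℝ) :
    ‖u * Complex.exp (Complex.I * t) + v * Complex.exp (-(Complex.I * t)) - 2 * s‖ +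
      ‖u * Complex.exp (Complex.I * t) + v * Complex.exp (-(Complex.I * t)) + 2 * s‖ =
      2 * (‖u‖ + ‖v‖) := by
  have hprod : s ^ 2 = u * Complex.exp (Complex.I * t) * (v * Complex.exp (-(Complex.I * t))) := by
    rw [mul_mul_mul_comm, ← Complex.exp_add, add_neg_cancel, Complex.exp_zero, mul_one, hs]
  have hu : ‖u * Complex.exp (Complex.I * t)‖ = ‖u‖ := by simp [Complex.norm_exp]
  have hv : ‖v * Complex.exp (-(Complex.I * t))‖ = ‖v‖ := by simp [Complex.norm_exp]
  rw [Complex.norm_sub_two_mul_add_norm_add_two_mul_of_sq_eq_mul hprod, hu, hv]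
end

section
/- Let n ≥ 3 be a natural number, let u, v, w, s be complex numbers with s² = u·v, and define z_k = u·e^{2πik/n} + v·e^{−2πik/n} + w for k ∈ ℤ. Then every midpoint m_k = (z_k + z_{k+1})/2 of consecutive vertices satisfies |m_k − (w + 2s·cos(π/n))| + |m_k − (w − 2s·cos(π/n))| = 2(|u| + |v|)·cos(π/n). That is, all midpoints of the sides of the affinely regular polygon z_0, …, z_{n−1} lie on a single ellipse with foci w ± 2s·cos(π/n). -/
/-!
Write the midpoint of the side from `z_k` to `z_{k+1}` as `w + cos(π/n)·(u ζ + v ζ⁻¹)` with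
`ζ = e^{iπ(2k+1)/n}` on the unit circle, so it suffices that `u ζ + v ζ⁻¹` lies on the ellipse with
foci `±2s` and string length `2(|u| + |v|)`. Choosing square roots with `u ζ = α²`, `v ζ⁻¹ = β²`
and `s = αβ`, the two focal distances are `|α - β|²` and `|α + β|²`, whose sum is
`2(|α|² + |β|²)` by the parallelogram law.
-/

open Complex

theorem Complex.exists_sq_eq_sq_eq_mul {a b s : ℂ} (h : s ^ 2 = a * b) :
    ∃ α β : ℂ, α ^ 2 = a ∧ β ^ 2 = b ∧ s = α * β := by
  obtain ⟨α, hα⟩ := IsAlgClosed.exists_pow_nat_eq a two_pos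
  obtain ⟨β, hβ⟩ := IsAlgClosed.exists_pow_nat_eq b two_pos
  have hprod : (s - α * β) * (s + α * β) = 0 := by
    linear_combination h - β ^ 2 * hα - a * hβ
  rcases mul_eq_zero.mp hprod with hs | hs
  · exact ⟨α, β, hα, hβ, by linear_combination hs⟩
  · exact ⟨α, -β, hα, by rw [neg_sq, hβ], by linear_combination hs⟩

theorem Complex.norm_sub_two_mul_add_norm_add_two_mul {a b s : ℂ} (h : s ^ 2 = a * b) :
    ‖a + b - 2 * s‖ + ‖a + b + 2 * s‖ = 2 * (‖a‖ + ‖b‖) := by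
  obtain ⟨α, β, rfl, rfl, rfl⟩ := exists_sq_eq_sq_eq_mul h
  have hsub : α ^ 2 + β ^ 2 - 2 * (α * β) = (α - β) ^ 2 := by ring
  have hadd : α ^ 2 + β ^ 2 + 2 * (α * β) = (α + β) ^ 2 := by ring
  rw [hsub, hadd, norm_pow, norm_pow, norm_pow, norm_pow]
  linarith [parallelogram_law_with_norm ℝ α β]

theorem Complex.norm_sub_two_mul_add_norm_add_two_mul_of_norm_eq_one {u v s ζ : ℂ}
    (hs : s ^ 2 = u * v) (hζ : ‖ζ‖ = 1) :
    ‖u * ζ + v * ζ⁻¹ - 2 * s‖ + ‖u * ζ + v * ζ⁻¹ + 2 * s‖ = 2 * (‖u‖ + ‖v‖) := by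
  have hζ0 : ζ ≠ 0 := norm_ne_zero_iff.mp (by rw [hζ]; exact one_ne_zero)
  have hnorm : ‖u * ζ‖ = ‖u‖ ∧ ‖v * ζ⁻¹‖ = ‖v‖ := by simp [hζ]
  rw [norm_sub_two_mul_add_norm_add_two_mul (by rw [hs]; field_simp), hnorm.1, hnorm.2]

theorem Complex.add_exp_sub_add_exp_add (u v x y : ℂ) :
    u * exp ((x - y) * I) + v * exp (-((x - y) * I)) +
        (u * exp ((x + y) * I) + v * exp (-((x + y) * I))) =
      2 * cos y * (u * exp (x * I) + v * (exp (x * I))⁻¹) := by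
  rw [two_cos, ← exp_neg (x * I)]
  simp only [add_mul, neg_add, sub_eq_add_neg, exp_add, neg_mul, neg_neg]
  ring

theorem Real.cos_pi_div_nonneg {n : ℕ} (hn : 2 ≤ n) : 0 ≤ Real.cos (Real.pi / n) := by
  apply Real.cos_nonneg_of_mem_Icc
  have hle : Real.pi / n ≤ Real.pi / 2 :=
    div_le_div_of_nonneg_left Real.pi_pos.le two_pos (by exact_mod_cast hn)
  constructor <;> linarith [Real.pi_pos, div_nonneg Real.pi_pos.le (Nat.cast_nonneg (α := ℝ) n)]

/-- For the affinely regular polygon with vertices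
`z_k = u·e^{2πik/n} + v·e^{−2πik/n} + w` (where `s² = u·v`), every midpoint
`(z_k + z_{k+1})/2` of consecutive vertices lies on the ellipse with foci
`w ± 2s·cos(π/n)` and string length `2(|u| + |v|)·cos(π/n)`. -/
theorem stmt_8 (n : ℕ) (hn : 3 ≤ n) (u v w s : ℂ) (hs : s ^ 2 = u * v)
    (z : ℤ → ℂ)
    (hz : ∀ k : ℤ, z k = u * Complex.exp (2 * Real.pi * Complex.I * k / n) +
      v * Complex.exp (-(2 * Real.pi * Complex.I * k / n)) + w) :
    ∀ k : ℤ,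
      ‖(z k + z (k + 1)) / 2 - (w + 2 * s * Real.cos (Real.pi / n))‖ +
        ‖(z k + z (k + 1)) / 2 - (w - 2 * s * Real.cos (Real.pi / n))‖ =
        2 * (‖u‖ + ‖v‖) * Real.cos (Real.pi / n) := by
  intro k
  set c := Real.cos (Real.pi / n)
  set θ : ℝ := Real.pi * (2 * k + 1) / n
  set ζ := exp (θ * I)
  have hn0 : (n : ℂ) ≠ 0 := Nat.cast_ne_zero.mpr (by omega)
  have hmid : (z k + z (k + 1)) / 2 = w + c * (u * ζ + v * ζ⁻¹) := by
    have hk : 2 * Real.pi * I * k / n = (θ - (Real.pi / n : ℝ)) * I := by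
      simp only [θ]; push_cast; field_simp; ring
    have hk1 : 2 * Real.pi * I * (k + 1 : ℤ) / n = (θ + (Real.pi / n : ℝ)) * I := by
      simp only [θ]; push_cast; field_simp; ring
    rw [hz, hz, hk, hk1, add_add_add_comm, add_exp_sub_add_exp_add, ← ofReal_cos]
    ring
  have hplus : (z k + z (k + 1)) / 2 - (w + 2 * s * c) = c * (u * ζ + v * ζ⁻¹ - 2 * s) := by
    rw [hmid]; ring
  have hminus : (z k + z (k + 1)) / 2 - (w - 2 * s * c) = c * (u * ζ + v * ζ⁻¹ + 2 * s) := by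
    rw [hmid]; ring
  rw [hplus, hminus, norm_mul, norm_mul, norm_real,
    Real.norm_of_nonneg (Real.cos_pi_div_nonneg (by omega)), ← mul_add,
    norm_sub_two_mul_add_norm_add_two_mul_of_norm_eq_one hs (norm_exp_ofReal_mul_I θ), mul_comm]
end

section
/- Let p be a complex polynomial of degree 4 whose derivative has roots α + β·cos(kπ/4) for k = 1, 2, 3 (i.e., α + β·√2/2, α, and α − β·√2/2) for some complex α and β ≠ 0. Then the roots of p form a parallelogram: there is an enumeration z₁, z₂, z₃, z₄ of the roots of p (with multiplicity) such that z₁ + z₃ = z₂ + z₄. -/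
/-!
The critical points `α + w, α, α - w` are symmetric about `α`, so `p' = a (X - α) ((X - α)² - w²)` is odd
about `α` and `p = a/4 ((X - α)² - w²)² + c` is a quadratic in `(X - α)²`. Splitting that quadratic as
`((X - α)² - u²) ((X - α)² - u'²)` gives the roots `α ± u, α ± u'`; the diagonals meet at `α`.
-/

open Polynomial

section
variable {K : Type*} [Field K]

theorem X_sub_C_add_mul_X_sub_C_sub (α w : K) :
    (X - C (α + w)) * (X - C (α - w)) = (X - C α) ^ 2 - C (w ^ 2) := by
  simp only [C_add, C_sub, C_pow]
  ring

theorem roots_C_mul_sq_sub_mul_sq_sub {a : K} (ha : a ≠ 0) (α w w' : K) :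
    (C a * (((X - C α) ^ 2 - C (w ^ 2)) * ((X - C α) ^ 2 - C (w' ^ 2)))).roots =
      {α + w, α + w', α - w, α - w'} := by
  have hprod : ((X - C α) ^ 2 - C (w ^ 2)) * ((X - C α) ^ 2 - C (w' ^ 2)) =
      (({α + w, α + w', α - w, α - w'} : Multiset K).map fun z => X - C z).prod := by
    simp only [← X_sub_C_add_mul_X_sub_C_sub, Multiset.insert_eq_cons, Multiset.map_cons,
      Multiset.prod_cons, Multiset.map_singleton, Multiset.prod_singleton]
    ring
  rw [roots_C_mul _ ha, hprod, roots_multiset_prod_X_sub_C]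

theorem exists_eq_add_C_of_derivative_eq [CharZero K] {p : K[X]} {a α s : K}
    (h : derivative p = C a * ((X - C α) * ((X - C α) ^ 2 - C s))) :
    ∃ c, p = C (a / 4) * ((X - C α) ^ 2 - C s) ^ 2 + C c := by
  set Q := C (a / 4) * ((X - C α) ^ 2 - C s) ^ 2
  have hQ : derivative Q = derivative p := by
    rw [h]
    simp only [Q, derivative_mul, derivative_pow, derivative_sub, derivative_C, derivative_X]
    rw [show C a = C (a / 4) * C 4 by rw [← C_mul, div_mul_cancel₀ a (by norm_num : (4 : K) ≠ 0)]]
    simp only [map_natCast, map_ofNat]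
    ring
  refine ⟨(p - Q).coeff 0, ?_⟩
  rw [← eq_C_of_derivative_eq_zero (by rw [derivative_sub, hQ, sub_self])]
  ring

variable [IsAlgClosed K]

theorem exists_eq_C_mul_X_sub_C_mul_sq_sub {q : K[X]} {α w : K} (h : q.roots = {α + w, α, α - w}) :
    ∃ a ≠ 0, q = C a * ((X - C α) * ((X - C α) ^ 2 - C (w ^ 2))) := by
  have hq : q ≠ 0 := by
    rintro rfl
    simp at h
  refine ⟨q.leadingCoeff, leadingCoeff_ne_zero.2 hq, ?_⟩
  conv_lhs =>
    rw [← C_leadingCoeff_mul_prod_multiset_X_sub_C (p := q) IsAlgClosed.card_roots_eq_natDegree, h]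
  simp only [← X_sub_C_add_mul_X_sub_C_sub, Multiset.insert_eq_cons, Multiset.map_cons,
    Multiset.prod_cons, Multiset.map_singleton, Multiset.prod_singleton]
  ring

theorem exists_roots_eq_of_derivative_eq [CharZero K] {p : K[X]} {a α s : K} (ha : a ≠ 0)
    (h : derivative p = C a * ((X - C α) * ((X - C α) ^ 2 - C s))) :
    ∃ w w', p.roots = {α + w, α + w', α - w, α - w'} := by
  obtain ⟨c, rfl⟩ := exists_eq_add_C_of_derivative_eq h
  obtain ⟨e, he⟩ := IsAlgClosed.exists_pow_nat_eq (-(4 * c / a)) two_pos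
  obtain ⟨w, hw⟩ := IsAlgClosed.exists_pow_nat_eq (s + e) two_pos
  obtain ⟨w', hw'⟩ := IsAlgClosed.exists_pow_nat_eq (s - e) two_pos
  have hc : c = -(a / 4 * e ^ 2) := by
    rw [he]
    field_simp
  refine ⟨w, w', ?_⟩
  have hfactor : C (a / 4) * ((X - C α) ^ 2 - C s) ^ 2 + C c =
      C (a / 4) * (((X - C α) ^ 2 - C (w ^ 2)) * ((X - C α) ^ 2 - C (w' ^ 2))) := by
    rw [hw, hw', hc]
    simp only [C_neg, C_mul, C_sub, C_add, C_pow]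
    ring
  rw [hfactor, roots_C_mul_sq_sub_mul_sq_sub (div_ne_zero ha (by norm_num))]

end

open Polynomial in
theorem stmt_14_general (p : Polynomial ℂ) (α β : ℂ)
    (hp' : (derivative p).roots =
      {α + β * Real.cos (Real.pi / 4), α + β * Real.cos (2 * Real.pi / 4),
        α + β * Real.cos (3 * Real.pi / 4)}) :
    ∃ z₁ z₂ z₃ z₄ : ℂ, p.roots = {z₁, z₂, z₃, z₄} ∧ z₁ + z₃ = z₂ + z₄ := by
  have hcos₂ : Real.cos (2 * Real.pi / 4) = 0 := by
    rw [show 2 * Real.pi / 4 = Real.pi / 2 by ring, Real.cos_pi_div_two]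
  have hcos₃ : Real.cos (3 * Real.pi / 4) = -Real.cos (Real.pi / 4) := by
    rw [show 3 * Real.pi / 4 = Real.pi - Real.pi / 4 by ring, Real.cos_pi_sub]
  set w : ℂ := β * Real.cos (Real.pi / 4)
  have hroots : (derivative p).roots = {α + w, α, α - w} := by
    rw [hp', hcos₂, hcos₃]
    simp only [Complex.ofReal_zero, Complex.ofReal_neg, mul_zero, add_zero, mul_neg,
      ← sub_eq_add_neg]
    rfl
  obtain ⟨a, ha, hderiv⟩ := exists_eq_C_mul_X_sub_C_mul_sq_sub hroots
  obtain ⟨z, z', hz⟩ := exists_roots_eq_of_derivative_eq ha hderiv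
  exact ⟨α + z, α + z', α - z, α - z', hz, by ring⟩

open Polynomial in
/-- If the critical points of a degree-4 polynomial `p` are
`α + β·cos(kπ/4)`, `k = 1, 2, 3`, with `β ≠ 0`, then the roots of `p` form a
parallelogram. -/
theorem stmt_14 (p : Polynomial ℂ) (hdeg : p.natDegree = 4) (α β : ℂ) (hβ : β ≠ 0)
    (hp' : (derivative p).roots =
      {α + β * Real.cos (Real.pi / 4), α + β * Real.cos (2 * Real.pi / 4),
        α + β * Real.cos (3 * Real.pi / 4)}) :
    ∃ z₁ z₂ z₃ z₄ : ℂ, p.roots = {z₁, z₂, z₃, z₄} ∧ z₁ + z₃ = z₂ + z₄ :=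
  stmt_14_general p α β hp'
end
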